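/- arXiv:1810.13186 — 3 statements merged into one kernel-verified Lean document; each statement's English description precedes it below -/
import Mathlib

section
/- The function r ↦ (√((r+1)(r+5)) − (r+1))/2 is strictly increasing on [0, ∞) and tends to 1 as r → ∞. -/
/-!
Substituting `s = r + 1` and rationalizing, the function becomes `2 / (√(1 + 4 / s) + 1)`,
which visibly increases with `s` and tends to `2 / 2 = 1`.
-/

open Real Filter Set Topology

lemma sqrt_mul_add_sub_eq_div {c s : ℝ} (hc : 0 ≤ c) (hs : 0 < s) :
    √(s * (s + c)) - s = c / (√(1 + c / s) + 1) := by
  have hsqrt : √(s * (s + c)) = s * √(1 + c / s) := by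
    rw [show s * (s + c) = s ^ 2 * (1 + c / s) by field_simp, sqrt_mul (sq_nonneg s),
      sqrt_sq hs.le]
  have hsq : √(1 + c / s) ^ 2 = 1 + c / s := sq_sqrt (by positivity)
  rw [hsqrt, eq_div_iff (by positivity)]
  have hcancel : s * (c / s) = c := by field_simp
  linear_combination s * hsq + hcancel

lemma strictMonoOn_sqrt_mul_add_sub {c : ℝ} (hc : 0 < c) :
    StrictMonoOn (fun s : ℝ => √(s * (s + c)) - s) (Ioi 0) := by
  intro a (ha : 0 < a) b (hb : 0 < b) hab
  simp only [sqrt_mul_add_sub_eq_div hc.le ha, sqrt_mul_add_sub_eq_div hc.le hb]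
  have hsqrt : √(1 + c / b) < √(1 + c / a) :=
    sqrt_lt_sqrt (by positivity) (by gcongr)
  exact div_lt_div_of_pos_left hc (by positivity) (by linarith)

lemma tendsto_sqrt_mul_add_sub {c : ℝ} (hc : 0 ≤ c) :
    Tendsto (fun s : ℝ => √(s * (s + c)) - s) atTop (𝓝 (c / 2)) := by
  have hratio : Tendsto (fun s : ℝ => c / s) atTop (𝓝 0) :=
    tendsto_const_nhds.div_atTop tendsto_id
  have hcont : ContinuousAt (fun t : ℝ => c / (√(1 + t) + 1)) 0 :=
    (continuousAt_const.div ((continuous_const.add continuous_id).sqrt.add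
      continuous_const).continuousAt (by positivity))
  have hlim := hcont.tendsto.comp hratio
  norm_num [Function.comp_def] at hlim
  refine hlim.congr' ?_
  filter_upwards [eventually_gt_atTop 0] with s hs
  exact (sqrt_mul_add_sub_eq_div hc hs).symm

/-- r ↦ (√((r+1)(r+5)) − (r+1))/2 is strictly increasing on [0,∞) and tends to 1 as r → ∞. -/
theorem stmt1 :
    StrictMonoOn (fun r : ℝ => (Real.sqrt ((r+1)*(r+5)) - (r+1))/2) (Set.Ici 0) ∧
    Filter.Tendsto (fun r : ℝ => (Real.sqrt ((r+1)*(r+5)) - (r+1))/2)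
      Filter.atTop (nhds 1) := by
  have hshift : (fun r : ℝ => (√((r + 1) * (r + 5)) - (r + 1)) / 2) =
      fun r => (fun s : ℝ => √(s * (s + 4)) - s) (r + 1) / 2 := by
    ext r; ring_nf
  rw [hshift]
  constructor
  · intro a (ha : 0 ≤ a) b (hb : 0 ≤ b) hab
    have := strictMonoOn_sqrt_mul_add_sub four_pos
      (show (0 : ℝ) < a + 1 by linarith) (show (0 : ℝ) < b + 1 by linarith) (by linarith)
    exact div_lt_div_of_pos_right this two_pos
  · have := ((tendsto_sqrt_mul_add_sub (c := 4) (by norm_num)).comp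
      (tendsto_atTop_add_const_right atTop 1 tendsto_id)).div_const 2
    norm_num [Function.comp_def] at this
    exact this
end

section
/- Let π(z) = (1−z)(1−λ)g(λ(1−z)) / (g(λ(1−z)) − z) be the Pollaczek–Khinchin generating function of an M/G/1 queue with arrival rate λ ∈ (0,1) and service-time Laplace transform g with g(0)=1, g'(0)=−1. Then π(0) + π'(0) = (1−λ)/g(λ), i.e., the probability that the queue length is at most one equals (1−λ)/g(λ). -/
/-! At `z = 0` the factor `1 - z` equals `1` and the denominator equals the numerator's
`g`-factor, so `π(0) = 1 - λ`. In the quotient rule for `π'(0)` the two terms carrying the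
derivative of `z ↦ g (λ (1 - z))` cancel, leaving `π'(0) = (1 - λ) / g(λ) - (1 - λ)`. -/

theorem hasDerivAt_one_sub_mul_div_sub_id_zero {G : ℝ → ℝ} {G' : ℝ} (a : ℝ)
    (hG : HasDerivAt G G' 0) (h0 : G 0 ≠ 0) :
    HasDerivAt (fun z => (1 - z) * a * G z / (G z - z)) (a / G 0 - a) 0 := by
  have hnum : HasDerivAt (fun z => (1 - z) * a * G z) (-a * G 0 + a * G') 0 := by
    simpa using (((hasDerivAt_id (0 : ℝ)).const_sub 1).mul_const a).fun_mul hG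
  have hden : HasDerivAt (fun z => G z - z) (G' - 1) 0 := hG.sub (hasDerivAt_id 0)
  refine (hnum.fun_div hden (by simpa using h0)).congr_deriv ?_
  field_simp
  ring

theorem one_sub_mul_div_sub_id_zero_add_deriv {G : ℝ → ℝ} (a : ℝ)
    (hG : DifferentiableAt ℝ G 0) (h0 : G 0 ≠ 0) :
    (fun z => (1 - z) * a * G z / (G z - z)) 0 + deriv (fun z => (1 - z) * a * G z / (G z - z)) 0
      = a / G 0 := by
  rw [(hasDerivAt_one_sub_mul_div_sub_id_zero a hG.hasDerivAt h0).deriv]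
  simp only [sub_zero, one_mul]
  rw [mul_div_cancel_right₀ a h0]
  ring

theorem stmt16_general (g : ℝ → ℝ) (lam : ℝ)
    (hgdiff : Differentiable ℝ g) (hgpos : 0 < g lam) :
    (fun z : ℝ => (1-z)*(1-lam)*g (lam*(1-z)) / (g (lam*(1-z)) - z)) 0 +
      deriv (fun z : ℝ => (1-z)*(1-lam)*g (lam*(1-z)) / (g (lam*(1-z)) - z)) 0
      = (1-lam)/g lam := by
  have hG : DifferentiableAt ℝ (fun z : ℝ => g (lam * (1 - z))) 0 := by fun_prop
  simpa using one_sub_mul_div_sub_id_zero_add_deriv (1 - lam) hG (by simpa using hgpos.ne')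

/-- Pollaczek–Khinchin: with π(z) = (1−z)(1−λ)g(λ(1−z))/(g(λ(1−z)) − z), g(0)=1,
g'(0) = −1, one has π(0) + π'(0) = (1−λ)/g(λ). -/
theorem stmt16 (g : ℝ → ℝ) (lam : ℝ) (hlam : lam ∈ Set.Ioo (0:ℝ) 1)
    (hg0 : g 0 = 1) (hg'0 : deriv g 0 = -1)
    (hgdiff : Differentiable ℝ g) (hgpos : 0 < g lam) :
    (fun z : ℝ => (1-z)*(1-lam)*g (lam*(1-z)) / (g (lam*(1-z)) - z)) 0 +
      deriv (fun z : ℝ => (1-z)*(1-lam)*g (lam*(1-z)) / (g (lam*(1-z)) - z)) 0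
      = (1-lam)/g lam :=
  stmt16_general g lam hgdiff hgpos
end

section
/- Let λ ∈ (0,1), k ≥ 1, p₁,…,p_k ≥ 0 with Σ pᵢ = 1, μᵢ > 0 with Σ pᵢ/μᵢ = 1. Then the function λ ↦ 1/λ − 1 − Σᵢ pᵢ μᵢ/(λ+μᵢ) is strictly decreasing on (0,1), tends to +∞ as λ → 0⁺, and is negative at λ = 1 whenever some μᵢ differs from another (nondegenerate case); hence the equation 1/λ = 1 + Σᵢ pᵢ μᵢ/(λ+μᵢ) has a unique solution λ* in (0,1), and λ* ≤ φ − 1. -/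
open Filter Set Finset

set_option maxHeartbeats 1000000

/-- Hyperexponential small-probe-rate bound: λ ↦ 1/λ − 1 − Σ pᵢμᵢ/(λ+μᵢ) is strictly
decreasing on (0,1), tends to +∞ as λ → 0⁺, is negative at λ = 1 in the nondegenerate
case, so 1/λ = 1 + Σ pᵢμᵢ/(λ+μᵢ) has a unique solution λ* in (0,1), and λ* ≤ φ − 1. -/
theorem stmt19 (k : ℕ) (hk : 1 ≤ k) (p μ : Fin k → ℝ) (hp : ∀ i, 0 ≤ p i)
    (hps : ∑ i, p i = 1) (hμ : ∀ i, 0 < μ i) (hmean : ∑ i, p i/μ i = 1)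
    (hnondeg : ∃ i j, μ i ≠ μ j) :
    StrictAntiOn (fun lam : ℝ => 1/lam - 1 - ∑ i, p i * μ i/(lam + μ i))
      (Set.Ioo 0 1) ∧
    Filter.Tendsto (fun lam : ℝ => 1/lam - 1 - ∑ i, p i * μ i/(lam + μ i))
      (nhdsWithin 0 (Set.Ioi 0)) Filter.atTop ∧
    (1/(1:ℝ) - 1 - ∑ i, p i * μ i/((1:ℝ) + μ i) < 0) ∧
    ∃ lam : ℝ, lam ∈ Set.Ioo (0:ℝ) 1 ∧
      1/lam = 1 + ∑ i, p i * μ i/(lam + μ i) ∧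
      lam ≤ (1 + Real.sqrt 5)/2 - 1 ∧
      ∀ x ∈ Set.Ioo (0:ℝ) 1, 1/x = 1 + ∑ i, p i * μ i/(x + μ i) → x = lam := by
  set F := fun lam : ℝ => 1/lam - 1 - ∑ i, p i * μ i/(lam + μ i) with hF
  -- some positive weight exists
  obtain ⟨i0, hi0⟩ : ∃ i, 0 < p i := by
    by_contra h
    push_neg at h
    have h0 : ∀ i, p i = 0 := fun i => le_antisymm (h i) (hp i)
    simp [h0] at hps
  -- strict antitonicity
  have hanti : StrictAntiOn F (Set.Ioo 0 1) := by
    rintro a ⟨ha0, ha1⟩ b ⟨hb0, hb1⟩ hab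
    have hsum : ∑ i, p i * μ i/(a + μ i) - ∑ i, p i * μ i/(b + μ i) < 1/a - 1/b := by
      rw [← Finset.sum_sub_distrib]
      have h1b : (1:ℝ)/a - 1/b = ∑ i, p i * (1/a - 1/b) := by
        rw [← Finset.sum_mul, hps, one_mul]
      rw [h1b]
      apply Finset.sum_lt_sum
      · intro i _
        have hai : 0 < a + μ i := add_pos ha0 (hμ i)
        have hbi : 0 < b + μ i := add_pos hb0 (hμ i)
        have e1 : p i * μ i/(a + μ i) - p i * μ i/(b + μ i)
            = p i * μ i * (b - a) / ((a + μ i) * (b + μ i)) := by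
          field_simp
          ring
        have e2 : p i * (1/a - 1/b) = p i * (b - a) / (a * b) := by
          field_simp
        rw [e1, e2, div_le_div_iff₀ (by positivity) (by positivity)]
        have hba : (0:ℝ) < b - a := sub_pos.mpr hab
        have key : (0:ℝ) < (a + μ i) * (b + μ i) - μ i * (a * b) := by
          nlinarith [mul_pos ha0 hb0, mul_pos ha0 (hμ i), mul_pos hb0 (hμ i),
            mul_pos (hμ i) (hμ i), mul_pos (mul_pos ha0 (hμ i)) (sub_pos.mpr hb1)]
        nlinarith [mul_nonneg (mul_nonneg (hp i) hba.le) key.le]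
      · refine ⟨i0, Finset.mem_univ i0, ?_⟩
        have hai : 0 < a + μ i0 := add_pos ha0 (hμ i0)
        have hbi : 0 < b + μ i0 := add_pos hb0 (hμ i0)
        have e1 : p i0 * μ i0/(a + μ i0) - p i0 * μ i0/(b + μ i0)
            = p i0 * μ i0 * (b - a) / ((a + μ i0) * (b + μ i0)) := by
          field_simp
          ring
        have e2 : p i0 * (1/a - 1/b) = p i0 * (b - a) / (a * b) := by
          field_simp
        rw [e1, e2, div_lt_div_iff₀ (by positivity) (by positivity)]
        have hba : (0:ℝ) < b - a := sub_pos.mpr hab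
        have key : (0:ℝ) < (a + μ i0) * (b + μ i0) - μ i0 * (a * b) := by
          nlinarith [mul_pos ha0 hb0, mul_pos ha0 (hμ i0), mul_pos hb0 (hμ i0),
            mul_pos (hμ i0) (hμ i0), mul_pos (mul_pos ha0 (hμ i0)) (sub_pos.mpr hb1)]
        nlinarith [mul_pos (mul_pos hi0 hba) key]
    simp only [hF]
    linarith
  -- tendsto atTop at 0+
  have hbnd : ∀ x : ℝ, 0 < x → ∑ i, p i * μ i/(x + μ i) ≤ 1 := by
    intro x hx
    calc ∑ i, p i * μ i/(x + μ i) ≤ ∑ i, p i := by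
          apply Finset.sum_le_sum
          intro i _
          have hxi : 0 < x + μ i := add_pos hx (hμ i)
          rw [div_le_iff₀ hxi]
          nlinarith [hp i, (hμ i).le]
      _ = 1 := hps
  have htop : Filter.Tendsto F (nhdsWithin 0 (Set.Ioi 0)) Filter.atTop := by
    apply tendsto_atTop_mono' _ _ (Filter.tendsto_atTop_add_const_right _ (-2)
      (tendsto_inv_nhdsGT_zero (𝕜 := ℝ)))
    filter_upwards [self_mem_nhdsWithin] with x hx
    have hx' : (0:ℝ) < x := hx
    have := hbnd x hx'
    simp only [hF, one_div]
    linarith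
  -- negative at 1
  have h1neg : F 1 < 0 := by
    have hpos : 0 < ∑ i, p i * μ i/((1:ℝ) + μ i) := by
      apply Finset.sum_pos'
      · intro i _
        exact div_nonneg (mul_nonneg (hp i) (hμ i).le) (by linarith [hμ i])
      · exact ⟨i0, Finset.mem_univ i0, div_pos (mul_pos hi0 (hμ i0)) (by linarith [hμ i0])⟩
    simp only [hF]
    linarith
  -- pick a point where F is positive
  have hmemIoo : ∀ᶠ x in nhdsWithin (0:ℝ) (Set.Ioi 0), x ∈ Set.Ioo (0:ℝ) 1 :=
    Filter.eventually_of_mem (Ioo_mem_nhdsGT_of_mem ⟨le_refl 0, one_pos⟩) (fun _ h => h)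
  obtain ⟨a, hFa, ha⟩ := ((htop.eventually_gt_atTop 0).and hmemIoo).exists
  -- continuity on [a,1]
  have hcont : ContinuousOn F (Set.Icc a 1) := by
    apply ContinuousOn.sub
    · apply ContinuousOn.sub
      · exact continuousOn_const.div continuousOn_id
          (fun x hx => ne_of_gt (lt_of_lt_of_le ha.1 hx.1))
      · exact continuousOn_const
    · apply continuousOn_finset_sum
      intro i _
      exact continuousOn_const.div (continuousOn_id.add continuousOn_const)
        (fun x hx => ne_of_gt (add_pos (lt_of_lt_of_le ha.1 hx.1) (hμ i)))
  -- IVT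
  obtain ⟨lam, hlamIoo, hFlam⟩ :=
    intermediate_value_Ioo' ha.2.le hcont (Set.mem_Ioo.mpr ⟨h1neg, hFa⟩)
  have hlam : lam ∈ Set.Ioo (0:ℝ) 1 := ⟨lt_trans ha.1 hlamIoo.1, hlamIoo.2⟩
  have heq : 1/lam = 1 + ∑ i, p i * μ i/(lam + μ i) := by
    simp only [hF] at hFlam
    linarith
  -- golden ratio constant
  have h5 : Real.sqrt 5 ^ 2 = 5 := Real.sq_sqrt (by norm_num)
  have hs0 : 0 ≤ Real.sqrt 5 := Real.sqrt_nonneg 5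
  set c : ℝ := (1 + Real.sqrt 5)/2 - 1 with hc
  have hc0 : 0 < c := by
    have : 1 < Real.sqrt 5 := by nlinarith
    simp only [hc]; linarith
  have hc1 : c < 1 := by
    have : Real.sqrt 5 < 3 := by nlinarith
    simp only [hc]; linarith
  have hcc : c^2 + c = 1 := by
    simp only [hc]
    linear_combination h5/4
  -- Jensen: 1/(1+c) ≤ ∑ pᵢμᵢ/(c+μᵢ)
  have hJ : 1/(1+c) ≤ ∑ i, p i * μ i/(c + μ i) := by
    have hB : ∑ i, p i * (c + μ i)/μ i = 1 + c := by
      have e : ∀ i, p i * (c + μ i)/μ i = c * (p i/μ i) + p i := by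
        intro i
        have hne : μ i ≠ 0 := (hμ i).ne'
        field_simp
      rw [Finset.sum_congr rfl fun i _ => e i, Finset.sum_add_distrib, ← Finset.mul_sum,
        hmean, hps]
      ring
    have hCS := Finset.sum_mul_sq_le_sq_mul_sq Finset.univ
      (fun i => Real.sqrt (p i * μ i/(c + μ i))) (fun i => Real.sqrt (p i * (c + μ i)/μ i))
    have e1 : ∀ i, Real.sqrt (p i * μ i/(c + μ i)) * Real.sqrt (p i * (c + μ i)/μ i)
        = p i := by
      intro i
      rw [← Real.sqrt_mul (div_nonneg (mul_nonneg (hp i) (hμ i).le) (add_pos hc0 (hμ i)).le)]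
      have heq2 : p i * μ i/(c + μ i) * (p i * (c + μ i)/μ i) = p i ^ 2 := by
        have hne : μ i ≠ 0 := (hμ i).ne'
        have hne2 : c + μ i ≠ 0 := (add_pos hc0 (hμ i)).ne'
        field_simp
      rw [heq2, Real.sqrt_sq (hp i)]
    have e2 : ∀ i, Real.sqrt (p i * μ i/(c + μ i)) ^ 2 = p i * μ i/(c + μ i) := by
      intro i
      exact Real.sq_sqrt (div_nonneg (mul_nonneg (hp i) (hμ i).le) (add_pos hc0 (hμ i)).le)
    have e3 : ∀ i, Real.sqrt (p i * (c + μ i)/μ i) ^ 2 = p i * (c + μ i)/μ i := by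
      intro i
      exact Real.sq_sqrt (div_nonneg (mul_nonneg (hp i) (add_pos hc0 (hμ i)).le) (hμ i).le)
    simp only [e1, e2, e3] at hCS
    rw [hps, hB] at hCS
    rw [div_le_iff₀ (by linarith)]
    nlinarith [hCS]
  -- F c ≤ 0
  have h1c : 1/c = 1 + c := by
    rw [eq_comm, eq_div_iff (ne_of_gt hc0)]
    linear_combination hcc
  have h2c : 1/(1+c) = c := by
    rw [div_eq_iff (by linarith : (1:ℝ) + c ≠ 0)]
    linear_combination hcc - h5/2
  have hFc : F c ≤ 0 := by
    simp only [hF]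
    rw [h1c]
    rw [h2c] at hJ
    linarith
  -- lam ≤ c
  have hle : lam ≤ c := by
    by_contra h
    push_neg at h
    have := hanti ⟨hc0, hc1⟩ hlam h
    rw [hFlam] at this
    linarith
  refine ⟨hanti, htop, ?_, lam, hlam, heq, hle, ?_⟩
  · exact h1neg
  · intro x hx hxeq
    have hFx : F x = 0 := by
      simp only [hF]
      linarith
    exact hanti.injOn hx hlam (hFx.trans hFlam.symm)
end
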